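/- arXiv:1010.5466 — 2 statements merged into one kernel-verified Lean document; each statement's English description precedes it below -/
import Mathlib

section
/- Let p be an odd prime and let n, d be integers satisfying 2d + 2 ≤ n ≤ 3d and such that no integer i with n − 2d ≤ i < d divides d. Let H = H_1(𝔽_{p^d}) and identify Z(H) with 𝔽_{p^d} via (0,0,s) ↦ s. Let M and N be 𝔽_p-subspaces of 𝔽_{p^d} of 𝔽_p-codimension n − 2d (so, as subgroups of Z(H), both have index p^n in H). Then the quotient groups H/M and H/N are isomorphic if and only if there exist σ ∈ Gal(𝔽_{p^d}/𝔽_p) and c ∈ 𝔽_{p^d}^× with σ(M)·c = N. -/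
set_option linter.unusedSectionVars false

/-- The generalized Heisenberg group `H_m(K)`: underlying set `K^m × K^m × K` with
multiplication `(u,v,s)·(u',v',s') = (u+u', v+v', s+s'+u·v')`. -/
structure Heisenberg (K : Type*) (m : ℕ) where
  x : Fin m → K
  y : Fin m → K
  z : K

namespace Heisenberg

variable {K : Type*} [Field K] {m : ℕ}

@[ext] lemma ext' {a b : Heisenberg K m} (hx : a.x = b.x) (hy : a.y = b.y) (hz : a.z = b.z) :
    a = b := by cases a; cases b; simp_all

instance : Mul (Heisenberg K m) :=
  ⟨fun a b => ⟨a.x + b.x, a.y + b.y, a.z + b.z + dotProduct a.x b.y⟩⟩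

instance : One (Heisenberg K m) := ⟨⟨0, 0, 0⟩⟩

instance : Inv (Heisenberg K m) :=
  ⟨fun a => ⟨-a.x, -a.y, -a.z + dotProduct a.x a.y⟩⟩

@[simp] lemma mul_x (a b : Heisenberg K m) : (a * b).x = a.x + b.x := rfl
@[simp] lemma mul_y (a b : Heisenberg K m) : (a * b).y = a.y + b.y := rfl
@[simp] lemma mul_z (a b : Heisenberg K m) :
    (a * b).z = a.z + b.z + dotProduct a.x b.y := rfl
@[simp] lemma one_x : (1 : Heisenberg K m).x = 0 := rfl
@[simp] lemma one_y : (1 : Heisenberg K m).y = 0 := rfl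
@[simp] lemma one_z : (1 : Heisenberg K m).z = 0 := rfl
@[simp] lemma inv_x (a : Heisenberg K m) : a⁻¹.x = -a.x := rfl
@[simp] lemma inv_y (a : Heisenberg K m) : a⁻¹.y = -a.y := rfl
@[simp] lemma inv_z (a : Heisenberg K m) : a⁻¹.z = -a.z + dotProduct a.x a.y := rfl

instance instGroup : Group (Heisenberg K m) where
  mul_assoc a b c := by
    ext <;> simp [add_dotProduct, dotProduct_add] <;> ring
  one_mul a := by ext <;> simp
  mul_one a := by ext <;> simp
  inv_mul_cancel a := by
    ext <;> simp [neg_dotProduct]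

end Heisenberg

namespace Heisenberg

/-- The embedding of the additive group of `K` onto the center `{(0,0,s)}` of `H_m(K)`. -/
def centerHom (K : Type*) [Field K] (m : ℕ) : Multiplicative K →* Heisenberg K m where
  toFun s := ⟨0, 0, s.toAdd⟩
  map_one' := rfl
  map_mul' s t := by ext <;> simp

/-- The subgroup `{(0,0,s) : s ∈ M}` of `H_m(K)` attached to an additive subgroup `M ≤ K`. -/
def centralSubgroup (K : Type*) [Field K] (m : ℕ) (M : AddSubgroup K) :
    Subgroup (Heisenberg K m) :=
  (AddSubgroup.toSubgroup M).map (centerHom K m)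

end Heisenberg

/-! An isomorphism `Φ : H/M ≃* H/N` maps centre to centre, so it induces an additive bijection `g`
of `K × K`, and since commutators in `H` are central with `z`-coordinate `wedge`, `Φ` sends
`wedge w w'` mod `M` to `wedge (g w) (g w')` mod `N`. Conjugating a homothety `r` by `g` therefore
gives a map `f` with `wedge (f x) y ≡ wedge x (f y)` mod `M`. Pairing with the trace-orthogonal
of `M`, the scalars commuting with (a component of) such an `f` form an intermediate field of
dimension at least `codim M`; by the divisibility hypothesis it is all of `K`, so `f` is a
homothety. Hence `g` is `σ`-semilinear, `wedge (g w) (g w') = c * σ (wedge w w')`, and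
`σ(M)·c = N`. Conversely `(u, v, s) ↦ (σ u, σ v * c, σ s * c)` is an automorphism of `H`
carrying `M` to `N`. -/

open Module

section CommutantField

variable {k K : Type*} [Field k] [Field K] [Algebra k K]

lemma AddSubgroup.eq_zero_of_forall_mul_mem {M : AddSubgroup K} (hM : M ≠ ⊤) {z : K}
    (h : ∀ x, x * z ∈ M) : z = 0 := by
  by_contra hz
  refine hM ((AddSubgroup.eq_top_iff' M).2 fun w => ?_)
  simpa [hz] using h (w * z⁻¹)

def LinearMap.commutantField (ψ : K →ₗ[k] K) : IntermediateField k K where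
  carrier := {r | ∀ y, ψ (r * y) = r * ψ y}
  mul_mem' ha hb y := by rw [mul_assoc, ha, hb, mul_assoc]
  add_mem' ha hb y := by rw [add_mul, map_add, ha, hb, add_mul]
  algebraMap_mem' c y := by rw [← Algebra.smul_def, map_smul, Algebra.smul_def]
  inv_mem' r hr y := by
    rcases eq_or_ne r 0 with rfl | hr0
    · simp
    · rw [eq_inv_mul_iff_mul_eq₀ hr0, ← hr, mul_inv_cancel_left₀ hr0]

lemma LinearMap.mem_commutantField {ψ : K →ₗ[k] K} {r : K} :
    r ∈ ψ.commutantField ↔ ∀ y, ψ (r * y) = r * ψ y := Iff.rfl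


section MulSubMulMem

variable {M : Submodule k K} {φ φ' : K → K}

lemma eq_of_forall_mul_sub_mem (hM : M ≠ ⊤) {a b : K} (h : ∀ x, x * (a - b) ∈ M) : a = b :=
  sub_eq_zero.1 <| AddSubgroup.eq_zero_of_forall_mul_mem (mt Submodule.toAddSubgroup_eq_top.1 hM) h

def linearOfMulSubMulMem (hM : M ≠ ⊤) (h : ∀ x y, φ x * y - x * φ' y ∈ M) : K →ₗ[k] K where
  toFun := φ'
  map_add' y z := eq_of_forall_mul_sub_mem hM fun x => by
    convert M.sub_mem (M.add_mem (h x y) (h x z)) (h x (y + z)) using 1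
    ring
  map_smul' c y := eq_of_forall_mul_sub_mem hM fun x => by
    convert M.sub_mem (M.smul_mem c (h x y)) (h x (c • y)) using 1
    simp only [Algebra.smul_def, RingHom.id_apply]
    ring

lemma trace_mul_mul_eq_of_mem_orthogonal (h : ∀ x y, φ x * y - x * φ' y ∈ M) {β : K}
    (hβ : β ∈ (Algebra.traceForm k K).orthogonal M) (x y : K) :
    Algebra.trace k K (β * (x * φ' y)) = Algebra.trace k K (β * (φ x * y)) := by
  have : Algebra.trace k K ((φ x * y - x * φ' y) * β) = 0 :=
    LinearMap.BilinForm.mem_orthogonal_iff.1 hβ _ (h x y)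
  rw [sub_mul, map_sub, sub_eq_zero] at this
  rw [mul_comm β, mul_comm β, this]

variable [FiniteDimensional k K] [Algebra.IsSeparable k K]

lemma div_mem_commutantField_of_mem_orthogonal (hM : M ≠ ⊤) (h : ∀ x y, φ x * y - x * φ' y ∈ M)
    {α γ : K} (hα : α ∈ (Algebra.traceForm k K).orthogonal M)
    (hγ : γ ∈ (Algebra.traceForm k K).orthogonal M) (hγ0 : γ ≠ 0) :
    α / γ ∈ (linearOfMulSubMulMem hM h).commutantField := by
  intro y
  change φ' (α / γ * y) = α / γ * φ' y
  suffices γ * φ' (α / γ * y) - α * φ' y = 0 from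
    calc φ' (α / γ * y) = γ⁻¹ * (γ * φ' (α / γ * y)) := (inv_mul_cancel_left₀ hγ0 _).symm
      _ = α / γ * φ' y := by rw [sub_eq_zero.1 this]; ring
  -- both terms pair with every `x` under the trace form to `Tr (α * (φ x * y))`
  refine (traceForm_nondegenerate k K).1 _ fun x => ?_
  have hγα : γ * (φ x * (α / γ * y)) = α * (φ x * y) := by field_simp
  rw [Algebra.traceForm_apply, sub_mul, map_sub, mul_assoc, mul_assoc, mul_comm _ x, mul_comm _ x,
    trace_mul_mul_eq_of_mem_orthogonal h hγ, trace_mul_mul_eq_of_mem_orthogonal h hα, hγα, sub_self]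

theorem exists_eq_mul_of_mul_sub_mul_mem (hM : M ≠ ⊤)
    (hL : ∀ L : IntermediateField k K, finrank k K - finrank k M ≤ finrank k L → L = ⊤)
    (h : ∀ x y, φ x * y - x * φ' y ∈ M) :
    ∃ c, (∀ x, φ x = c * x) ∧ ∀ y, φ' y = c * y := by
  set W := (Algebra.traceForm k K).orthogonal M
  have hW : finrank k W = finrank k K - finrank k M :=
    LinearMap.BilinForm.finrank_orthogonal (traceForm_nondegenerate k K) M
  obtain ⟨γ, hγ, hγ0⟩ : ∃ γ ∈ W, γ ≠ 0 := by
    refine Submodule.exists_mem_ne_zero_of_ne_bot fun hbot => ?_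
    have := Submodule.finrank_lt hM
    rw [hbot, finrank_bot] at hW
    omega
  have hdiv : W.map (DistribMulAction.toLinearEquiv k K (Units.mk0 γ⁻¹ (inv_ne_zero hγ0)) :
      K →ₗ[k] K) ≤
        Subalgebra.toSubmodule (linearOfMulSubMulMem hM h).commutantField.toSubalgebra := by
    rintro _ ⟨α, hα, rfl⟩
    simpa [div_eq_inv_mul] using div_mem_commutantField_of_mem_orthogonal hM h hα hγ hγ0
  have htop := hL _ (by
    have := Submodule.finrank_mono hdiv
    rwa [LinearEquiv.finrank_map_eq, hW, Subalgebra.finrank_toSubmodule,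
      IntermediateField.finrank_eq_finrank_subalgebra] at this)
  have hφ' : ∀ y, φ' y = φ' 1 * y := fun y => by
    have : φ' (y * 1) = y * φ' 1 :=
      (linearOfMulSubMulMem hM h).mem_commutantField.1 (htop ▸ IntermediateField.mem_top) 1
    rw [mul_one] at this
    rw [this, mul_comm]
  refine ⟨φ' 1, fun x => eq_of_forall_mul_sub_mem hM fun y => ?_, hφ'⟩
  convert h x y using 1
  rw [hφ' y]
  ring

end MulSubMulMem
end CommutantField

section Wedge

variable {K : Type*} [Field K]

def wedge (w w' : K × K) : K := w.1 * w'.2 - w'.1 * w.2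

lemma wedge_smul_left (r : K) (w w' : K × K) : wedge (r • w) w' = r * wedge w w' := by
  simp only [wedge, Prod.smul_fst, Prod.smul_snd, smul_eq_mul]; ring

lemma wedge_smul_right (r : K) (w w' : K × K) : wedge w (r • w') = r * wedge w w' := by
  simp only [wedge, Prod.smul_fst, Prod.smul_snd, smul_eq_mul]; ring

lemma eq_zero_of_forall_wedge_mem {M : AddSubgroup K} (hM : M ≠ ⊤) {w : K × K}
    (h : ∀ w', wedge w w' ∈ M) : w = 0 := by
  refine Prod.ext (AddSubgroup.eq_zero_of_forall_mul_mem hM fun v => ?_)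
    (AddSubgroup.eq_zero_of_forall_mul_mem hM fun v => ?_)
  · simpa [wedge, mul_comm] using h (0, v)
  · simpa [wedge] using M.neg_mem (h (v, 0))

lemma wedge_map_of_map_smul (g : K × K →+ K × K) (σ : K →+* K)
    (hg : ∀ (r : K) x, g (r • x) = σ r • g x) (w w' : K × K) :
    wedge (g w) (g w') = wedge (g (1, 0)) (g (0, 1)) * σ (wedge w w') := by
  have hdecomp : ∀ v : K × K, g v = σ v.1 • g (1, 0) + σ v.2 • g (0, 1) := fun v => by
    conv_lhs => rw [show v = v.1 • ((1 : K), (0 : K)) + v.2 • ((0 : K), (1 : K)) by ext <;> simp]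
    rw [map_add, hg, hg]
  simp only [hdecomp w, hdecomp w', wedge, map_sub, map_mul, Prod.fst_add, Prod.snd_add,
    Prod.smul_fst, Prod.smul_snd, smul_eq_mul]
  ring

variable {k : Type*} [Field k] [Algebra k K] [FiniteDimensional k K] [Algebra.IsSeparable k K]
  {M : Submodule k K}

lemma eq_zero_of_mul_add_mul_mem (h2 : (2 : K) ≠ 0) (hM : M ≠ ⊤)
    (hL : ∀ L : IntermediateField k K, finrank k K - finrank k M ≤ finrank k L → L = ⊤)
    {φ : K → K} (h : ∀ x y, φ x * y + x * φ y ∈ M) (x : K) : φ x = 0 := by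
  obtain ⟨c, hφ, hφ'⟩ := exists_eq_mul_of_mul_sub_mul_mem (φ' := fun y => -φ y) hM hL
    fun x y => by simpa [sub_eq_add_neg] using h x y
  have hc : c = 0 := by
    have h1 := hφ 1
    have h1' := hφ' 1
    exact (mul_eq_zero.1 (by linear_combination -h1 - h1' : 2 * c = 0)).resolve_left h2
  rw [hφ, hc, zero_mul]

theorem exists_eq_smul_of_wedge_sub_wedge_mem (h2 : (2 : K) ≠ 0) (hM : M ≠ ⊤)
    (hL : ∀ L : IntermediateField k K, finrank k K - finrank k M ≤ finrank k L → L = ⊤)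
    {f : K × K → K × K} (hf : ∀ x y, wedge (f x) y - wedge x (f y) ∈ M) :
    ∃ c : K, ∀ x, f x = c • x := by
  have hM' : M.toAddSubgroup ≠ ⊤ := mt Submodule.toAddSubgroup_eq_top.1 hM
  have hadd : ∀ x x', f (x + x') = f x + f x' := fun x x' => sub_eq_zero.1 <|
    eq_zero_of_forall_wedge_mem hM' fun y => by
      rw [Submodule.mem_toAddSubgroup]
      convert M.sub_mem (M.sub_mem (hf (x + x') y) (hf x y)) (hf x' y) using 1
      simp only [wedge, Prod.fst_add, Prod.snd_add, Prod.fst_sub, Prod.snd_sub]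
      ring
  have h21 := eq_zero_of_mul_add_mul_mem (φ := fun u => (f (u, 0)).2) h2 hM hL fun x y => by
    convert M.neg_mem (hf (x, 0) (y, 0)) using 1
    simp only [wedge]
    ring
  have h12 := eq_zero_of_mul_add_mul_mem (φ := fun v => (f (0, v)).1) h2 hM hL fun x y => by
    simpa [wedge, mul_comm] using hf (0, x) (0, y)
  obtain ⟨c, h11, h22⟩ := exists_eq_mul_of_mul_sub_mul_mem
    (φ := fun u => (f (u, 0)).1) (φ' := fun v => (f (0, v)).2) hM hL fun x y => by
      simpa [wedge] using hf (x, 0) (0, y)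
  refine ⟨c, fun x => ?_⟩
  rw [show x = (x.1, 0) + (0, x.2) by simp, hadd]
  ext
  · simp [h11, h12]
  · simp [h21, h22]

end Wedge

theorem AddEquiv.exists_ringEquiv_map_smul_of_forall_exists_map_smul {K V : Type*} [Field K]
    [Finite K] [AddCommGroup V] [Module K V] [Nontrivial V] (g : V ≃+ V)
    (hg : ∀ r : K, ∃ c : K, ∀ x, g (c • x) = r • g x) :
    ∃ σ : K ≃+* K, ∀ r x, g (r • x) = σ r • g x := by
  choose χ hχ using hg
  obtain ⟨v, hv⟩ := exists_ne (0 : V)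
  have hχ_eq : ∀ c r, (∀ x, g (c • x) = r • g x) → χ r = c := fun c r hc =>
    smul_left_injective K hv (g.injective (by rw [hχ, hc]))
  let χhom : K →+* K :=
    { toFun := χ
      map_one' := hχ_eq 1 1 fun x => by simp
      map_mul' := fun r s => hχ_eq _ _ fun x => by rw [mul_smul, hχ, hχ, mul_smul]
      map_zero' := hχ_eq 0 0 fun x => by simp
      map_add' := fun r s => hχ_eq _ _ fun x => by rw [add_smul, map_add, hχ, hχ, add_smul] }
  let e := RingEquiv.ofBijective χhom (Finite.injective_iff_bijective.1 χhom.injective)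
  refine ⟨e.symm, fun r x => ?_⟩
  conv_lhs => rw [← e.apply_symm_apply r]
  exact hχ _ x

namespace Heisenberg

open scoped commutatorElement

variable {K : Type*} [Field K]

lemma mem_centralSubgroup_iff {m : ℕ} {M : AddSubgroup K} {a : Heisenberg K m} :
    a ∈ centralSubgroup K m M ↔ a.x = 0 ∧ a.y = 0 ∧ a.z ∈ M := by
  constructor
  · rintro ⟨t, ht, rfl⟩
    exact ⟨rfl, rfl, ht⟩
  · rintro ⟨hx, hy, hz⟩
    exact ⟨.ofAdd a.z, hz, by ext <;> simp [centerHom, hx, hy]⟩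

lemma centerHom_mem_center {m : ℕ} (s : Multiplicative K) :
    centerHom K m s ∈ Subgroup.center (Heisenberg K m) :=
  Subgroup.mem_center_iff.2 fun b => by ext <;> simp [centerHom, add_comm]

def ofPair (w : K × K) : Heisenberg K 1 := ⟨fun _ => w.1, fun _ => w.2, 0⟩

def proj : Heisenberg K 1 →* Multiplicative (K × K) where
  toFun a := .ofAdd (a.x 0, a.y 0)
  map_one' := rfl
  map_mul' _ _ := rfl

lemma proj_ofPair (w : K × K) : proj (ofPair w) = .ofAdd w := rfl

lemma ofPair_zero : ofPair (0 : K × K) = 1 := by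
  ext <;> rfl

lemma ofPair_mul_ofPair (w w' : K × K) :
    ofPair w * ofPair w' = ofPair (w + w') * centerHom K 1 (.ofAdd (w.1 * w'.2)) := by
  ext <;> simp [ofPair, centerHom, dotProduct]

lemma commutatorElement_eq (a b : Heisenberg K 1) :
    ⁅a, b⁆ = centerHom K 1 (.ofAdd (wedge (proj a).toAdd (proj b).toAdd)) := by
  rw [commutatorElement_def]
  ext
  · simp [centerHom]
  · simp [centerHom]
  · simp [centerHom, proj, wedge, dotProduct]
    ring

section Quotient

variable (M : AddSubgroup K) [(centralSubgroup K 1 M).Normal]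

def centerQuot : Multiplicative K →* Heisenberg K 1 ⧸ centralSubgroup K 1 M :=
  (QuotientGroup.mk' _).comp (centerHom K 1)

def projQuot : Heisenberg K 1 ⧸ centralSubgroup K 1 M →* Multiplicative (K × K) :=
  QuotientGroup.lift _ proj fun a ha => by
    obtain ⟨hx, hy, -⟩ := mem_centralSubgroup_iff.1 ha
    simp [proj, hx, hy]

variable {M}

lemma centerQuot_eq_one_iff {s : K} : centerQuot M (.ofAdd s) = 1 ↔ s ∈ M := by
  simp [centerQuot, QuotientGroup.eq_one_iff, mem_centralSubgroup_iff, centerHom]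

lemma centerQuot_eq_centerQuot_iff {s t : K} :
    centerQuot M (.ofAdd s) = centerQuot M (.ofAdd t) ↔ s - t ∈ M := by
  rw [← div_eq_one, ← map_div, ← ofAdd_sub, centerQuot_eq_one_iff]

lemma centerQuot_mem_center (s : Multiplicative K) :
    centerQuot M s ∈ Subgroup.center (Heisenberg K 1 ⧸ centralSubgroup K 1 M) :=
  Subgroup.mem_center_iff.2 fun ξ => by
    obtain ⟨b, rfl⟩ := QuotientGroup.mk'_surjective _ ξ
    rw [centerQuot, MonoidHom.comp_apply, ← map_mul, ← map_mul,
      Subgroup.mem_center_iff.1 (centerHom_mem_center s) b]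

lemma centerQuot_wedge (a b : Heisenberg K 1) :
    centerQuot M (.ofAdd (wedge (proj a).toAdd (proj b).toAdd)) =
      ⁅QuotientGroup.mk' (centralSubgroup K 1 M) a, QuotientGroup.mk' _ b⁆ := by
  rw [centerQuot, MonoidHom.comp_apply, ← commutatorElement_eq, map_commutatorElement]

lemma projQuot_mk (a : Heisenberg K 1) : projQuot M (QuotientGroup.mk' _ a) = proj a := rfl

lemma projQuot_eq_one_of_mem_center (hM : M ≠ ⊤) {ξ : Heisenberg K 1 ⧸ centralSubgroup K 1 M}
    (hξ : ξ ∈ Subgroup.center _) : projQuot M ξ = 1 := by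
  obtain ⟨a, rfl⟩ := QuotientGroup.mk'_surjective _ ξ
  refine toAdd_eq_zero.1 (eq_zero_of_forall_wedge_mem hM fun w => ?_)
  rw [projQuot_mk, ← centerQuot_eq_one_iff, ← toAdd_ofAdd w, ← proj_ofPair w, centerQuot_wedge,
    commutatorElement_eq_one_iff_mul_comm]
  exact (Subgroup.mem_center_iff.1 hξ _).symm

end Quotient

section Isomorphism

variable {M N : AddSubgroup K} [(centralSubgroup K 1 M).Normal] [(centralSubgroup K 1 N).Normal]
  (hN : N ≠ ⊤)
  (Φ : Heisenberg K 1 ⧸ centralSubgroup K 1 M ≃* Heisenberg K 1 ⧸ centralSubgroup K 1 N)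

def inducedMap : K × K →+ K × K where
  toFun w := (projQuot N (Φ (QuotientGroup.mk' _ (ofPair w)))).toAdd
  map_zero' := by rw [ofPair_zero, map_one, map_one, map_one, toAdd_one]
  map_add' w w' := by
    have hc : projQuot N (Φ (QuotientGroup.mk' _ (centerHom K 1 (.ofAdd (w.1 * w'.2))))) = 1 :=
      projQuot_eq_one_of_mem_center hN
        ((Subgroup.centerCongr Φ ⟨_, centerQuot_mem_center (M := M) _⟩).2)
    rw [← toAdd_mul, ← map_mul, ← map_mul, ← map_mul, ofPair_mul_ofPair, map_mul, map_mul,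
      map_mul, hc, mul_one]

lemma inducedMap_apply_of_mk_eq {w : K × K} {a : Heisenberg K 1}
    (ha : QuotientGroup.mk' (centralSubgroup K 1 N) a = Φ (QuotientGroup.mk' _ (ofPair w))) :
    inducedMap hN Φ w = (proj a).toAdd := by
  rw [← projQuot_mk (M := N), ha]
  rfl

lemma map_centerQuot_wedge (w w' : K × K) :
    Φ (centerQuot M (.ofAdd (wedge w w'))) =
      centerQuot N (.ofAdd (wedge (inducedMap hN Φ w) (inducedMap hN Φ w'))) := by
  obtain ⟨a, ha⟩ :=
    QuotientGroup.mk'_surjective (centralSubgroup K 1 N) (Φ (QuotientGroup.mk' _ (ofPair w)))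
  obtain ⟨b, hb⟩ :=
    QuotientGroup.mk'_surjective (centralSubgroup K 1 N) (Φ (QuotientGroup.mk' _ (ofPair w')))
  rw [inducedMap_apply_of_mk_eq hN Φ ha, inducedMap_apply_of_mk_eq hN Φ hb, centerQuot_wedge,
    ha, hb, ← map_commutatorElement, ← centerQuot_wedge]
  rfl

lemma inducedMap_injective (hM : M ≠ ⊤) : Function.Injective (inducedMap hN Φ) :=
  (injective_iff_map_eq_zero _).2 fun w hw => eq_zero_of_forall_wedge_mem hM fun w' => by
    rw [← centerQuot_eq_one_iff, ← Φ.map_eq_one_iff, map_centerQuot_wedge hN Φ, hw]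
    simp [wedge]

lemma wedge_sub_wedge_mem_of_inducedMap_comp {f : K × K → K × K} {r : K}
    (hf : ∀ x, inducedMap hN Φ (f x) = r • inducedMap hN Φ x) (x y : K × K) :
    wedge (f x) y - wedge x (f y) ∈ M := by
  rw [← centerQuot_eq_centerQuot_iff, ← Φ.injective.eq_iff, map_centerQuot_wedge hN Φ,
    map_centerQuot_wedge hN Φ, hf, hf, wedge_smul_left, wedge_smul_right]

end Isomorphism

def mapSemilinear {m : ℕ} (σ : K ≃+* K) (c : Kˣ) : Heisenberg K m ≃* Heisenberg K m where
  toFun a := ⟨fun i => σ (a.x i), fun i => σ (a.y i) * c, σ a.z * c⟩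
  invFun b := ⟨fun i => σ.symm (b.x i), fun i => σ.symm (b.y i * ↑c⁻¹), σ.symm (b.z * ↑c⁻¹)⟩
  left_inv a := by ext <;> simp
  right_inv b := by ext <;> simp
  map_mul' a b := by
    ext
    · simp
    · simp [add_mul]
    · simp [add_mul, dotProduct, Finset.sum_mul, mul_assoc]

lemma map_centralSubgroup_mapSemilinear {m : ℕ} {M N : AddSubgroup K} (σ : K ≃+* K) (c : Kˣ)
    (h : (fun x => σ x * (c : K)) '' (M : Set K) = N) :
    (centralSubgroup K m M).map (mapSemilinear (m := m) σ c : Heisenberg K m →* Heisenberg K m) =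
      centralSubgroup K m N := by
  ext a
  simp only [Subgroup.mem_map, mem_centralSubgroup_iff]
  constructor
  · rintro ⟨b, ⟨hbx, hby, hbz⟩, rfl⟩
    refine ⟨by ext; simp [mapSemilinear, hbx], by ext; simp [mapSemilinear, hby], ?_⟩
    change σ b.z * c ∈ (N : Set K)
    exact h ▸ ⟨b.z, hbz, rfl⟩
  · rintro ⟨hax, hay, haz⟩
    obtain ⟨s, hs, hsa⟩ := (h ▸ haz : a.z ∈ (fun x => σ x * (c : K)) '' (M : Set K))
    exact ⟨centerHom K m (.ofAdd s), ⟨rfl, rfl, hs⟩, by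
      ext <;> simp [mapSemilinear, centerHom, hax, hay, hsa]⟩

end Heisenberg

open Heisenberg in
theorem exists_ringEquiv_image_eq_of_mulEquiv {k K : Type*} [Field k] [Field K] [Finite K]
    [Algebra k K] [FiniteDimensional k K] [Algebra.IsSeparable k K] {M N : Submodule k K}
    [(centralSubgroup K 1 M.toAddSubgroup).Normal] [(centralSubgroup K 1 N.toAddSubgroup).Normal]
    (h2 : (2 : K) ≠ 0) (hM : M ≠ ⊤) (hN : N ≠ ⊤)
    (hL : ∀ L : IntermediateField k K, finrank k K - finrank k M ≤ finrank k L → L = ⊤)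
    (Φ : Heisenberg K 1 ⧸ centralSubgroup K 1 M.toAddSubgroup ≃*
      Heisenberg K 1 ⧸ centralSubgroup K 1 N.toAddSubgroup) :
    ∃ (σ : K ≃+* K) (c : Kˣ), (fun x => σ x * (c : K)) '' (M : Set K) = N := by
  have hN' : N.toAddSubgroup ≠ ⊤ := mt Submodule.toAddSubgroup_eq_top.1 hN
  set g := inducedMap hN' Φ
  have hg : Function.Injective g :=
    inducedMap_injective hN' Φ (mt Submodule.toAddSubgroup_eq_top.1 hM)
  let gE : K × K ≃+ K × K := AddEquiv.ofBijective g (Finite.injective_iff_bijective.1 hg)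
  obtain ⟨σ, hσ⟩ := gE.exists_ringEquiv_map_smul_of_forall_exists_map_smul fun r => by
    obtain ⟨c, hc⟩ := exists_eq_smul_of_wedge_sub_wedge_mem h2 hM hL
      (wedge_sub_wedge_mem_of_inducedMap_comp hN' Φ (f := fun x => gE.symm (r • gE x))
        fun x => gE.apply_symm_apply _)
    exact ⟨c, fun x => by rw [← hc, gE.apply_symm_apply]⟩
  set c := wedge (g (1, 0)) (g (0, 1))
  have hmem : ∀ s, s ∈ M ↔ σ s * c ∈ N := fun s => by
    have hΦ := map_centerQuot_wedge hN' Φ (s, 0) (0, 1)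
    rw [wedge_map_of_map_smul g σ hσ, show wedge (s, 0) ((0, 1) : K × K) = s by simp [wedge]] at hΦ
    rw [← Submodule.mem_toAddSubgroup, ← centerQuot_eq_one_iff (M := M.toAddSubgroup),
      ← Φ.map_eq_one_iff, hΦ, centerQuot_eq_one_iff, mul_comm]
    rfl
  have hc : c ≠ 0 := fun hc => hM (Submodule.eq_top_iff'.2 fun s => (hmem s).2 (by simp [hc]))
  refine ⟨σ, Units.mk0 c hc, Set.ext fun t => ⟨?_, fun ht => ⟨σ.symm (t / c), ?_, ?_⟩⟩⟩
  · rintro ⟨s, hs, rfl⟩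
    exact (hmem s).1 hs
  · rw [SetLike.mem_coe, hmem, σ.apply_symm_apply, div_mul_cancel₀ _ hc]
    exact ht
  · simp [div_mul_cancel₀ _ hc]

theorem IntermediateField.eq_top_of_le_finrank {k K : Type*} [Field k] [Field K] [Algebra k K]
    [FiniteDimensional k K] {e : ℕ} (he : ∀ i, e ≤ i → i < finrank k K → ¬ i ∣ finrank k K)
    {L : IntermediateField k K} (hL : e ≤ finrank k L) : L = ⊤ := by
  have hdvd : finrank k L ∣ finrank k K :=
    finrank_top' (F := k) (E := K) ▸ finrank_dvd_of_le_right le_top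
  refine eq_of_le_of_finrank_eq le_top ?_
  rw [finrank_top']
  by_contra hne
  exact he _ hL (lt_of_le_of_ne (Nat.le_of_dvd finrank_pos hdvd) hne) hdvd

/-- Let `p` be an odd prime, `2d+2 ≤ n ≤ 3d`, and suppose no integer `i` with
`n-2d ≤ i < d` divides `d`.  Let `H = H_1(𝔽_{p^d})`, identify `Z(H)` with `𝔽_{p^d}`, and let
`M`, `N` be `𝔽_p`-subspaces of `𝔽_{p^d}` of codimension `n-2d`.  Then `H/M ≅ H/N` if and only
if there are `σ ∈ Gal(𝔽_{p^d}/𝔽_p)` and `c ∈ 𝔽_{p^d}ˣ` with `σ(M)·c = N`. -/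
theorem heisenberg_quotient_iso_iff_semilinear
    (p n d : ℕ) [Fact p.Prime] (hp : Odd p)
    (h1 : 2 * d + 2 ≤ n) (h2 : n ≤ 3 * d)
    (h3 : ∀ i : ℕ, n - 2 * d ≤ i → i < d → ¬ i ∣ d)
    (M N : Submodule (ZMod p) (GaloisField p d))
    (hM : Module.finrank (ZMod p) M = d - (n - 2 * d))
    (hN : Module.finrank (ZMod p) N = d - (n - 2 * d))
    [(Heisenberg.centralSubgroup (GaloisField p d) 1 M.toAddSubgroup).Normal]
    [(Heisenberg.centralSubgroup (GaloisField p d) 1 N.toAddSubgroup).Normal] :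
    Nonempty
        ((Heisenberg (GaloisField p d) 1 ⧸
            Heisenberg.centralSubgroup (GaloisField p d) 1 M.toAddSubgroup) ≃*
          (Heisenberg (GaloisField p d) 1 ⧸
            Heisenberg.centralSubgroup (GaloisField p d) 1 N.toAddSubgroup)) ↔
      ∃ (σ : GaloisField p d ≃+* GaloisField p d) (c : (GaloisField p d)ˣ),
        (fun x => σ x * (c : GaloisField p d)) '' (M : Set (GaloisField p d)) =
          (N : Set (GaloisField p d)) := by
  have hK : finrank (ZMod p) (GaloisField p d) = d := GaloisField.finrank p (by omega)
  have hne_top : ∀ P : Submodule (ZMod p) (GaloisField p d),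
      finrank (ZMod p) P = d - (n - 2 * d) → P ≠ ⊤ := fun P hP hP_top => by
    rw [hP_top, finrank_top, hK] at hP
    omega
  have hL : ∀ L : IntermediateField (ZMod p) (GaloisField p d),
      finrank (ZMod p) (GaloisField p d) - finrank (ZMod p) M ≤ finrank (ZMod p) L → L = ⊤ :=
    fun L hL => IntermediateField.eq_top_of_le_finrank (hK ▸ h3) (by omega)
  have htwo : (2 : GaloisField p d) ≠ 0 := Ring.two_ne_zero <| by
    rw [ringChar.eq (GaloisField p d) p]
    rintro rfl
    exact absurd hp (by decide)
  constructor
  · rintro ⟨Φ⟩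
    exact exists_ringEquiv_image_eq_of_mulEquiv htwo (hne_top M hM) (hne_top N hN) hL Φ
  · rintro ⟨σ, c, h⟩
    exact ⟨QuotientGroup.congr _ _ (Heisenberg.mapSemilinear σ c)
      (Heisenberg.map_centralSubgroup_mapSemilinear σ c h)⟩
end

section
/- Let p be an odd prime, K a finite field of characteristic p, m ≥ 1, and let N be a proper subgroup of Z(H_m(K)). Then the quotient group G = H_m(K)/N is directly indecomposable: whenever G is isomorphic to a direct product A × B of groups, then A is trivial or B is trivial. -/
set_option linter.unusedSectionVars false

/-!
In `H_m(K)` the commutator of `(u, v, s)` and `(u', v', s')` is the central element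
`(0, 0, u ⬝ v' - u' ⬝ v)`, so for each noncentral `g` the commutators `⁅g, k⁆` exhaust the center.
This survives in `G = H_m(K)/N`: a noncentral `h ∈ H_m(K)` cannot become central modulo `N`,
since then all of its commutators, i.e. the whole center, would lie in the proper subgroup `N`.

If `G ≅ A × B` and `a ∈ A` is noncentral, the commutators `⁅(a, 1), k⁆` have trivial
`B`-component, so `Z(B) = 1`. Were `A` and `B` both nontrivial, at least one of them would be
nonabelian (as `G` is), hence the other centerless and therefore nonabelian too, hence both
centerless; but `Z(G) ≠ 1` because `N` is a proper subgroup of `Z(H_m(K))`.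
-/

open Subgroup
open scoped commutatorElement

lemma MulEquiv.apply_mem_center_iff {G H : Type*} [Group G] [Group H] (e : G ≃* H) {g : G} :
    e g ∈ center H ↔ g ∈ center G :=
  MulEquivClass.apply_mem_center_iff e

section Quotient

variable {G : Type*} [Group G] {N : Subgroup G} [N.Normal]

lemma QuotientGroup.mk_mem_center {g : G} (hg : g ∈ center G) :
    (g : G ⧸ N) ∈ center (G ⧸ N) := by
  rw [mem_center_iff] at hg ⊢
  intro q
  induction q using QuotientGroup.induction_on with
  | H r => rw [← QuotientGroup.mk_mul, ← QuotientGroup.mk_mul, hg r]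

lemma Subgroup.center_quotient_ne_bot (hN : N < center G) : center (G ⧸ N) ≠ ⊥ := by
  obtain ⟨c, hc, hcN⟩ := SetLike.exists_of_lt hN
  refine fun h => hcN ?_
  rw [← QuotientGroup.eq_one_iff, ← mem_bot, ← h]
  exact QuotientGroup.mk_mem_center hc

end Quotient

def CommutatorMapsOntoCenter (G : Type*) [Group G] : Prop :=
  ∀ g ∉ center G, ∀ z ∈ center G, ∃ k : G, ⁅g, k⁆ = z

namespace CommutatorMapsOntoCenter

section DirectProduct

variable {G A B : Type*} [Group G] [Group A] [Group B]

lemma center_eq_bot_of_mulEquiv_prod (hP : CommutatorMapsOntoCenter G) (e : G ≃* A × B)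
    (hA : center A ≠ ⊤) : center B = ⊥ := by
  obtain ⟨a, ha⟩ := SetLike.exists_not_mem_of_ne_top _ hA rfl
  refine (eq_bot_iff_forall _).2 fun b hb => ?_
  have hg : e.symm (a, 1) ∉ center G := by
    rw [e.symm.apply_mem_center_iff, Subgroup.center_prod, mem_prod]
    exact fun h => ha h.1
  have hz : e.symm (1, b) ∈ center G := by
    rw [e.symm.apply_mem_center_iff, Subgroup.center_prod, mem_prod]
    exact ⟨one_mem _, hb⟩
  obtain ⟨k, hk⟩ := hP _ hg _ hz
  -- the `B`-component of `⁅(a, 1), e k⁆` is `⁅1, (e k).2⁆ = 1`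
  simpa [map_commutatorElement, commutatorElement_def] using (congrArg (fun g => (e g).2) hk).symm

theorem subsingleton_or_subsingleton_of_mulEquiv_prod (hP : CommutatorMapsOntoCenter G)
    (hbot : center G ≠ ⊥) (htop : center G ≠ ⊤) (e : G ≃* A × B) :
    Subsingleton A ∨ Subsingleton B := by
  by_contra! ⟨_, _⟩
  have hAB : center A ≠ ⊤ → center B = ⊥ := hP.center_eq_bot_of_mulEquiv_prod e
  have hBA : center B ≠ ⊤ → center A = ⊥ :=
    hP.center_eq_bot_of_mulEquiv_prod (e.trans MulEquiv.prodComm)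
  have hnc : center A ≠ ⊤ ∨ center B ≠ ⊤ := by
    by_contra! h
    refine htop (eq_top_iff.2 fun g _ => ?_)
    rw [← e.apply_mem_center_iff, Subgroup.center_prod, h.1, h.2, top_prod_top]
    exact mem_top _
  have hcenter : center A = ⊥ ∧ center B = ⊥ := by
    rcases hnc with hA' | hB'
    · exact ⟨hBA (hAB hA' ▸ bot_ne_top), hAB hA'⟩
    · exact ⟨hBA hB', hAB (hBA hB' ▸ bot_ne_top)⟩
  refine hbot ((eq_bot_iff_forall _).2 fun z hz => e.injective ?_)
  rw [← e.apply_mem_center_iff, Subgroup.center_prod, hcenter.1, hcenter.2,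
    prod_eq_bot_iff.2 ⟨rfl, rfl⟩, mem_bot] at hz
  rw [hz, map_one]

end DirectProduct

section Quotient

variable {G : Type*} [Group G] {N : Subgroup G} [N.Normal]

lemma mk_mem_center_iff (hP : CommutatorMapsOntoCenter G) (hN : N < center G) {g : G} :
    (g : G ⧸ N) ∈ center (G ⧸ N) ↔ g ∈ center G := by
  refine ⟨fun hg => ?_, QuotientGroup.mk_mem_center⟩
  by_contra hg'
  refine hN.not_ge fun z hz => ?_
  obtain ⟨k, rfl⟩ := hP g hg' z hz
  rw [← QuotientGroup.eq_one_iff, ← QuotientGroup.mk'_apply, map_commutatorElement,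
    commutatorElement_eq_one_iff_mul_comm]
  exact (mem_center_iff.1 hg _).symm

theorem quotient (hP : CommutatorMapsOntoCenter G) (hN : N < center G) :
    CommutatorMapsOntoCenter (G ⧸ N) := by
  intro g hg z hz
  obtain ⟨g, rfl⟩ := QuotientGroup.mk_surjective g
  obtain ⟨z, rfl⟩ := QuotientGroup.mk_surjective z
  rw [hP.mk_mem_center_iff hN] at hg hz
  obtain ⟨k, rfl⟩ := hP g hg z hz
  exact ⟨k, (map_commutatorElement (QuotientGroup.mk' N) g k).symm⟩

lemma center_quotient_ne_top (hP : CommutatorMapsOntoCenter G) (hN : N < center G)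
    (htop : center G ≠ ⊤) : center (G ⧸ N) ≠ ⊤ := by
  obtain ⟨g, hg⟩ := SetLike.exists_not_mem_of_ne_top _ htop rfl
  exact fun h => hg ((hP.mk_mem_center_iff hN).1 (h ▸ mem_top _))

end Quotient

end CommutatorMapsOntoCenter

namespace Heisenberg

variable {K : Type*} [Field K] {m : ℕ}

lemma commutatorElement_eq_s19 (a b : Heisenberg K m) :
    ⁅a, b⁆ = ⟨0, 0, a.x ⬝ᵥ b.y - b.x ⬝ᵥ a.y⟩ := by
  ext
  · simp [commutatorElement_def]
  · simp [commutatorElement_def]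
  · simp only [commutatorElement_def, mul_x, mul_z, inv_x, inv_y, inv_z,
      add_dotProduct, neg_dotProduct, dotProduct_neg]
    ring

lemma mem_center_iff {a : Heisenberg K m} : a ∈ center (Heisenberg K m) ↔ a.x = 0 ∧ a.y = 0 := by
  rw [Subgroup.mem_center_iff]
  refine ⟨fun h => ⟨funext fun i => ?_, funext fun i => ?_⟩, fun ⟨hx, hy⟩ g => ?_⟩
  · simpa using congrArg Heisenberg.z (h ⟨0, Pi.single i 1, 0⟩)
  · simpa using (congrArg Heisenberg.z (h ⟨Pi.single i 1, 0, 0⟩)).symm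
  · ext <;> simp [hx, hy, add_comm]

lemma exists_dotProduct_sub_dotProduct_eq {u v : Fin m → K} (h : ¬(u = 0 ∧ v = 0)) (t : K) :
    ∃ x y : Fin m → K, u ⬝ᵥ y - x ⬝ᵥ v = t := by
  by_cases hu : u = 0
  · obtain ⟨j, hj⟩ : ∃ j, v j ≠ 0 := Function.ne_iff.1 fun hv => h ⟨hu, hv⟩
    refine ⟨Pi.single j (-t / v j), 0, ?_⟩
    simp only [hu, zero_dotProduct, single_dotProduct]
    field_simp [hj]
    ring
  · obtain ⟨i, hi⟩ : ∃ i, u i ≠ 0 := Function.ne_iff.1 hu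
    refine ⟨0, Pi.single i (t / u i), ?_⟩
    simp only [dotProduct_single, zero_dotProduct, sub_zero]
    field_simp [hi]

theorem commutatorMapsOntoCenter : CommutatorMapsOntoCenter (Heisenberg K m) := by
  intro g hg z hz
  rw [mem_center_iff] at hg hz
  obtain ⟨x, y, hxy⟩ := exists_dotProduct_sub_dotProduct_eq hg z.z
  refine ⟨⟨x, y, 0⟩, ?_⟩
  rw [commutatorElement_eq_s19]
  ext <;> simp [hz.1, hz.2, hxy]

lemma center_ne_top (hm : 1 ≤ m) : center (Heisenberg K m) ≠ ⊤ := by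
  intro h
  have := (mem_center_iff (a := ⟨Pi.single ⟨0, hm⟩ 1, 0, 0⟩)).1 (h ▸ mem_top _)
  simpa using congrFun this.1 ⟨0, hm⟩

end Heisenberg

theorem heisenberg_quotient_directly_indecomposable_general
    (K : Type) [Field K] (m : ℕ) (hm : 1 ≤ m)
    (N : Subgroup (Heisenberg K m)) [N.Normal]
    (hN : N < Subgroup.center (Heisenberg K m))
    (A B : Type) [Group A] [Group B]
    (e : (Heisenberg K m ⧸ N) ≃* A × B) :
    Subsingleton A ∨ Subsingleton B :=
  have hP := Heisenberg.commutatorMapsOntoCenter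
  (hP.quotient hN).subsingleton_or_subsingleton_of_mulEquiv_prod (center_quotient_ne_bot hN)
    (hP.center_quotient_ne_top hN (Heisenberg.center_ne_top hm)) e

/-- For an odd prime `p`, a finite field `K` of characteristic `p`, `m ≥ 1`,
and a proper subgroup `N` of the center of `H_m(K)`, the quotient `H_m(K)/N` is directly
indecomposable: if it is isomorphic to a direct product `A × B`, then `A` or `B` is trivial. -/
theorem heisenberg_quotient_directly_indecomposable
    (p : ℕ) [Fact p.Prime] (hp : Odd p)
    (K : Type) [Field K] [Fintype K] [CharP K p] (m : ℕ) (hm : 1 ≤ m)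
    (N : Subgroup (Heisenberg K m)) [N.Normal]
    (hN : N < Subgroup.center (Heisenberg K m))
    (A B : Type) [Group A] [Group B]
    (e : (Heisenberg K m ⧸ N) ≃* A × B) :
    Subsingleton A ∨ Subsingleton B :=
  heisenberg_quotient_directly_indecomposable_general K m hm N hN A B e
end
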